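/- arXiv:1409.1122 — 3 statements merged into one kernel-verified Lean document; each statement's English description precedes it below -/
import Mathlib

section
/- Let p > 0, σ_x > 0, σ_n > 0, K, M ∈ ℕ. Let x be a random vector in ℝ^K with i.i.d. entries N(0, σ_x²) and n a random vector in ℝ^M with i.i.d. entries N(0, σ_n²), independent of x. Then the mean-squared-error function J : ℝ^{M×K} → ℝ₊ defined by J(S) = E[ ( Σ_{k=1}^K |x_k|^p − ‖S φ_p(x) + n‖₂² )² ] attains a (global) minimum on ℝ^{M×K}, i.e. there exists S* ∈ ℝ^{M×K} with J(S*) ≤ J(S) for all S ∈ ℝ^{M×K}. -/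
open Matrix MeasureTheory ProbabilityTheory

/-- Pre-processing map `φ_p : ℝ^K → ℝ^K`, `(φ_p x)_k = |x_k|^(p/2)`. -/
noncomputable def phi (p : ℝ) {K : ℕ} (x : Fin K → ℝ) : Fin K → ℝ :=
  fun k => |x k| ^ (p / 2)

/-- Law of a random vector in `ℝ^K` with i.i.d. entries `N(0, σ²)`. -/
noncomputable def gaussPi (K : ℕ) (σ : ℝ) : Measure (Fin K → ℝ) :=
  Measure.pi fun _ => gaussianReal 0 (σ ^ 2).toNNReal

/-- Joint law of independent `x` (i.i.d. `N(0,σx²)` entries) and `n` (i.i.d. `N(0,σn²)` entries). -/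
noncomputable def jointMeas (K M : ℕ) (σx σn : ℝ) :
    Measure ((Fin K → ℝ) × (Fin M → ℝ)) :=
  (gaussPi K σx).prod (gaussPi M σn)

/-- The MSE objective `J(S) = E[(Σₖ |x_k|^p − ‖S φ_p(x) + n‖₂²)²]`. -/
noncomputable def J (p σx σn : ℝ) (K M : ℕ) (S : Matrix (Fin M) (Fin K) ℝ) : ℝ :=
  ∫ z, ((∑ k, |z.1 k| ^ p) - ∑ m, ((S *ᵥ phi p z.1 + z.2) m) ^ 2) ^ 2
    ∂(jointMeas K M σx σn)

/-!
`J` is continuous by dominated convergence, so it suffices to show `J S → ∞` as `S → ∞`.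
By Jensen, `J S ≥ (E‖S φ_p(x) + n‖² - E Σₖ |x_k|^p)²`, and pointwise
`‖S φ_p(x) + n‖² ≥ ½ ‖S φ_p(x)‖² - ‖n‖²`. Since the coordinates of `x` are independent,
`E (a ⬝ᵥ φ_p(x))² ≥ Var(a ⬝ᵥ φ_p(x)) = v Σₖ a_k²` with `v = Var |x₁|^(p/2) > 0`, so
`E‖S φ_p(x) + n‖²` grows at least like `(v/2) Σ S_mk²`.
-/

open Filter Topology
open scoped NNReal ENNReal

instance {m n R : Type*} [Countable m] [Countable n] [TopologicalSpace R]
    [FirstCountableTopology R] : FirstCountableTopology (Matrix m n R) :=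
  inferInstanceAs (FirstCountableTopology (m → n → R))

section Moments

variable {Ω : Type*} [MeasurableSpace Ω] {μ : Measure Ω}

theorem MeasureTheory.MemLp.sq {f : Ω → ℝ} (hf : MemLp f 4 μ) :
    MemLp (fun ω => f ω ^ 2) 2 μ := by
  convert hf.norm_rpow_div 2 using 1
  · ext ω; simp
  · rw [ENNReal.eq_div_iff (by norm_num) (by norm_num)]; norm_num

theorem sq_integral_le_integral_sq [IsProbabilityMeasure μ] {f : Ω → ℝ} (hf : MemLp f 2 μ) :
    (∫ ω, f ω ∂μ) ^ 2 ≤ ∫ ω, f ω ^ 2 ∂μ := by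
  have := variance_nonneg f μ
  rw [variance_eq_sub hf] at this
  simpa [sub_nonneg] using this

theorem memLp_dotProduct {ι : Type*} [Fintype ι] {X : Ω → ι → ℝ} {q : ℝ≥0∞}
    (hX : ∀ k, MemLp (fun ω => X ω k) q μ) (a : ι → ℝ) : MemLp (fun ω => a ⬝ᵥ X ω) q μ :=
  memLp_finsetSum _ fun k _ => (hX k).const_mul (a k)

theorem variance_mul_sum_sq_le_integral_sq {ι E : Type*} [Fintype ι] [MeasurableSpace E]
    {ν : Measure E} [IsProbabilityMeasure ν] {g : E → ℝ} (hg : MemLp g 2 ν) (a : ι → ℝ) :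
    Var[g; ν] * ∑ k, a k ^ 2 ≤ ∫ x, (∑ k, a k * g (x k)) ^ 2 ∂Measure.pi fun _ => ν := by
  have hindep := variance_sum_pi (μ := fun _ : ι => ν) (X := fun k t => a k * g t)
    fun k => hg.const_mul (a k)
  calc Var[g; ν] * ∑ k, a k ^ 2 = ∑ k, Var[fun t => a k * g t; ν] := by
        simp only [variance_const_mul, Finset.sum_mul, mul_comm (Var[g; ν])]
    _ = Var[∑ k, fun x : ι → E => a k * g (x k); Measure.pi fun _ => ν] := hindep.symm
    _ ≤ _ := by
      refine (variance_le_expectation_sq ?_).trans_eq ?_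
      · exact (memLp_finsetSum' _ fun k _ => ((hg.const_mul (a k)).comp_measurePreserving
          (measurePreserving_eval _ k))).aestronglyMeasurable
      · simp [Finset.sum_fn]

end Moments

section MeanSquaredError

variable {Ω ι κ : Type*} [MeasurableSpace Ω] [Fintype ι] [Fintype κ]

noncomputable def mse (μ : Measure Ω) (A : Ω → ℝ) (X : Ω → ι → ℝ) (N : Ω → κ → ℝ)
    (S : Matrix κ ι ℝ) : ℝ :=
  ∫ ω, (A ω - ∑ m, ((S *ᵥ X ω + N ω) m) ^ 2) ^ 2 ∂μ

theorem sum_sq_mulVec_add_le (S : Matrix κ ι ℝ) (u : ι → ℝ) (w : κ → ℝ) :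
    ∑ m, ((S *ᵥ u + w) m) ^ 2
      ≤ 2 * (∑ m, ∑ k, S m k ^ 2) * ∑ k, u k ^ 2 + 2 * ∑ m, w m ^ 2 := by
  calc ∑ m, ((S *ᵥ u + w) m) ^ 2
      ≤ ∑ m, (2 * ((∑ k, S m k ^ 2) * ∑ k, u k ^ 2) + 2 * w m ^ 2) := by
        refine Finset.sum_le_sum fun m _ => ?_
        have hcs : (S *ᵥ u) m ^ 2 ≤ (∑ k, S m k ^ 2) * ∑ k, u k ^ 2 :=
          Finset.sum_mul_sq_le_sq_mul_sq _ _ _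
        simp only [Pi.add_apply]
        nlinarith [sq_nonneg ((S *ᵥ u) m - w m)]
    _ = _ := by simp only [Finset.sum_add_distrib, ← Finset.mul_sum, ← Finset.sum_mul]; ring

theorem half_sum_sq_mulVec_sub_le (S : Matrix κ ι ℝ) (u : ι → ℝ) (w : κ → ℝ) :
    (∑ m, (S *ᵥ u) m ^ 2) / 2 - ∑ m, w m ^ 2 ≤ ∑ m, ((S *ᵥ u + w) m) ^ 2 := by
  rw [Finset.sum_div, ← Finset.sum_sub_distrib]
  refine Finset.sum_le_sum fun m _ => ?_
  simp only [Pi.add_apply]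
  nlinarith [sq_nonneg ((S *ᵥ u) m + 2 * w m)]

theorem isCompact_setOf_sum_sq_le (t : ℝ) :
    IsCompact {S : Matrix κ ι ℝ | ∑ m, ∑ k, S m k ^ 2 ≤ t} := by
  refine (isCompact_univ_pi fun _ => isCompact_univ_pi fun _ =>
    isCompact_Icc (a := -√t) (b := √t)).of_isClosed_subset
    (isClosed_le (by fun_prop) continuous_const) fun S hS => ?_
  simp only [Set.mem_pi, Set.mem_univ, true_implies, Set.mem_Icc, ← abs_le]
  intro m k
  refine Real.abs_le_sqrt (le_trans ?_ hS)
  calc S m k ^ 2 ≤ ∑ k', S m k' ^ 2 :=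
        Finset.single_le_sum (fun k' _ => sq_nonneg (S m k')) (Finset.mem_univ k)
    _ ≤ ∑ m', ∑ k', S m' k' ^ 2 :=
        Finset.single_le_sum (f := fun m' => ∑ k', S m' k' ^ 2)
          (fun _ _ => Finset.sum_nonneg fun _ _ => sq_nonneg _) (Finset.mem_univ m)

theorem tendsto_sum_sq_cocompact :
    Tendsto (fun S : Matrix κ ι ℝ => ∑ m, ∑ k, S m k ^ 2) (cocompact _) atTop :=
  tendsto_atTop.2 fun t => mem_cocompact.2 ⟨_, isCompact_setOf_sum_sq_le t, fun S hS => by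
    simp only [Set.mem_compl_iff, Set.mem_ofPred_eq, not_le] at hS ⊢
    exact hS.le⟩

variable {μ : Measure Ω} {A : Ω → ℝ} {X : Ω → ι → ℝ} {N : Ω → κ → ℝ}

theorem memLp_sum_sq_mulVec_add (hX : ∀ k, MemLp (fun ω => X ω k) 4 μ)
    (hN : ∀ m, MemLp (fun ω => N ω m) 4 μ) (S : Matrix κ ι ℝ) :
    MemLp (fun ω => ∑ m, ((S *ᵥ X ω + N ω) m) ^ 2) 2 μ :=
  memLp_finsetSum _ fun m _ => ((memLp_dotProduct hX (S m)).add (hN m)).sq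

theorem continuous_mse (hA : MemLp A 2 μ) (hX : ∀ k, MemLp (fun ω => X ω k) 4 μ)
    (hN : ∀ m, MemLp (fun ω => N ω m) 4 μ) : Continuous (mse μ A X N) := by
  refine continuous_iff_continuousAt.2 fun S₀ => ?_
  set R := ∑ m, ∑ k, S₀ m k ^ 2 + 1
  have hnhds : {S : Matrix κ ι ℝ | ∑ m, ∑ k, S m k ^ 2 < R} ∈ 𝓝 S₀ :=
    (isOpen_lt (by fun_prop) continuous_const).mem_nhds (by simp [R])
  have hU := memLp_finsetSum Finset.univ fun k _ => (hX k).sq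
  have hW := memLp_finsetSum Finset.univ fun m _ => (hN m).sq
  have hbound : Integrable (fun ω => 2 * A ω ^ 2
      + 2 * (2 * R * ∑ k, X ω k ^ 2 + 2 * ∑ m, N ω m ^ 2) ^ 2) μ :=
    (hA.integrable_sq.const_mul 2).add
      (((hU.const_mul (2 * R)).add (hW.const_mul 2)).integrable_sq.const_mul 2)
  refine continuousAt_of_dominated (Eventually.of_forall fun S =>
      (hA.sub (memLp_sum_sq_mulVec_add hX hN S)).integrable_sq.aestronglyMeasurable)
    ?_ hbound (ae_of_all _ fun ω => by fun_prop)
  filter_upwards [hnhds] with S hS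
  refine ae_of_all _ fun ω => ?_
  have hB0 : 0 ≤ ∑ m, ((S *ᵥ X ω + N ω) m) ^ 2 := Finset.sum_nonneg fun _ _ => sq_nonneg _
  have hU0 : 0 ≤ ∑ k, X ω k ^ 2 := Finset.sum_nonneg fun _ _ => sq_nonneg _
  have hBR : ∑ m, ((S *ᵥ X ω + N ω) m) ^ 2
      ≤ 2 * R * ∑ k, X ω k ^ 2 + 2 * ∑ m, N ω m ^ 2 := by
    refine (sum_sq_mulVec_add_le S (X ω) (N ω)).trans ?_
    gcongr
  rw [Real.norm_eq_abs, abs_of_nonneg (sq_nonneg _)]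
  nlinarith [sq_nonneg (A ω + ∑ m, ((S *ᵥ X ω + N ω) m) ^ 2)]

variable [IsProbabilityMeasure μ]

theorem sub_le_integral_sum_sq_mulVec_add (hX : ∀ k, MemLp (fun ω => X ω k) 4 μ)
    (hN : ∀ m, MemLp (fun ω => N ω m) 4 μ) {c : ℝ}
    (hcoer : ∀ a : ι → ℝ, c * ∑ k, a k ^ 2 ≤ ∫ ω, (a ⬝ᵥ X ω) ^ 2 ∂μ) (S : Matrix κ ι ℝ) :
    c / 2 * ∑ m, ∑ k, S m k ^ 2 - ∫ ω, ∑ m, N ω m ^ 2 ∂μ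
      ≤ ∫ ω, ∑ m, ((S *ᵥ X ω + N ω) m) ^ 2 ∂μ := by
  have hrow m : Integrable (fun ω => (S *ᵥ X ω) m ^ 2) μ :=
    (memLp_dotProduct hX (S m)).sq.integrable one_le_two
  have hnoise m : Integrable (fun ω => N ω m ^ 2) μ := (hN m).sq.integrable one_le_two
  have hrow_coer : c * ∑ m, ∑ k, S m k ^ 2 ≤ ∑ m, ∫ ω, (S *ᵥ X ω) m ^ 2 ∂μ := by
    rw [Finset.mul_sum]
    exact Finset.sum_le_sum fun m _ => hcoer (S m)
  calc c / 2 * ∑ m, ∑ k, S m k ^ 2 - ∫ ω, ∑ m, N ω m ^ 2 ∂μ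
      ≤ (∑ m, ∫ ω, (S *ᵥ X ω) m ^ 2 ∂μ) / 2 - ∫ ω, ∑ m, N ω m ^ 2 ∂μ := by linarith
    _ = ∫ ω, ((∑ m, (S *ᵥ X ω) m ^ 2) / 2 - ∑ m, N ω m ^ 2) ∂μ := by
      rw [integral_sub ((integrable_finsetSum _ fun m _ => hrow m).div_const 2)
        (integrable_finsetSum _ fun m _ => hnoise m), integral_div,
        integral_finsetSum _ fun m _ => hrow m]
    _ ≤ ∫ ω, ∑ m, ((S *ᵥ X ω + N ω) m) ^ 2 ∂μ :=
      integral_mono (((integrable_finsetSum _ fun m _ => hrow m).div_const 2).sub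
          (integrable_finsetSum _ fun m _ => hnoise m))
        ((memLp_sum_sq_mulVec_add hX hN S).integrable one_le_two)
        fun ω => half_sum_sq_mulVec_sub_le S (X ω) (N ω)

theorem tendsto_mse_cocompact (hA : MemLp A 2 μ) (hX : ∀ k, MemLp (fun ω => X ω k) 4 μ)
    (hN : ∀ m, MemLp (fun ω => N ω m) 4 μ) {c : ℝ} (hc : 0 < c)
    (hcoer : ∀ a : ι → ℝ, c * ∑ k, a k ^ 2 ≤ ∫ ω, (a ⬝ᵥ X ω) ^ 2 ∂μ) :
    Tendsto (mse μ A X N) (cocompact _) atTop := by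
  have hgap : Tendsto (fun S : Matrix κ ι ℝ =>
      ∫ ω, ∑ m, ((S *ᵥ X ω + N ω) m) ^ 2 ∂μ - ∫ ω, A ω ∂μ) (cocompact _) atTop :=
    tendsto_atTop_mono
      (fun S => by linarith [sub_le_integral_sum_sq_mulVec_add hX hN hcoer S])
      (tendsto_atTop_add_const_right _ (-(∫ ω, ∑ m, N ω m ^ 2 ∂μ) - ∫ ω, A ω ∂μ)
        (tendsto_sum_sq_cocompact.const_mul_atTop (half_pos hc)))
  refine tendsto_atTop_mono (fun S => ?_) ((tendsto_pow_atTop two_ne_zero).comp hgap)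
  have hB := memLp_sum_sq_mulVec_add hX hN S
  calc (∫ ω, ∑ m, ((S *ᵥ X ω + N ω) m) ^ 2 ∂μ - ∫ ω, A ω ∂μ) ^ 2
      = (∫ ω, (A ω - ∑ m, ((S *ᵥ X ω + N ω) m) ^ 2) ∂μ) ^ 2 := by
        rw [integral_sub (hA.integrable one_le_two) (hB.integrable one_le_two)]; ring
    _ ≤ mse μ A X N S := sq_integral_le_integral_sq (hA.sub hB)

theorem exists_forall_mse_le (hA : MemLp A 2 μ) (hX : ∀ k, MemLp (fun ω => X ω k) 4 μ)
    (hN : ∀ m, MemLp (fun ω => N ω m) 4 μ) {c : ℝ} (hc : 0 < c)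
    (hcoer : ∀ a : ι → ℝ, c * ∑ k, a k ^ 2 ≤ ∫ ω, (a ⬝ᵥ X ω) ^ 2 ∂μ) :
    ∃ S₀, ∀ S, mse μ A X N S₀ ≤ mse μ A X N S :=
  (continuous_mse hA hX hN).exists_forall_le (tendsto_mse_cocompact hA hX hN hc hcoer)

end MeanSquaredError

section Gaussian

variable {m : ℝ} {v : ℝ≥0} {r : ℝ}

theorem memLp_abs_rpow_gaussianReal (hr : 0 < r) (q : ℝ≥0) :
    MemLp (fun t : ℝ => |t| ^ r) q (gaussianReal m v) := by
  convert (memLp_id_gaussianReal (q * r.toNNReal)).norm_rpow_div (ENNReal.ofReal r) using 1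
  · ext t; simp [ENNReal.toReal_ofReal hr.le]
  · rw [ENNReal.coe_mul, ENNReal.ofReal, ENNReal.mul_div_cancel_right] <;> simp [hr]

theorem variance_abs_rpow_gaussianReal_pos (hv : v ≠ 0) (hr : 0 < r) :
    0 < Var[fun t : ℝ => |t| ^ r; gaussianReal m v] := by
  have := nullSingletonClass_gaussianReal (μ := m) hv
  refine (variance_nonneg _ _).lt_of_ne' fun h0 => ?_
  have hconst := ae_eq_integral_of_variance_eq_zero
    (by exact_mod_cast memLp_abs_rpow_gaussianReal hr 2) h0
  obtain ⟨t₀, ht₀⟩ := hconst.exists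
  have hpair : ∀ᵐ t ∂gaussianReal m v, t ∈ ({t₀, -t₀} : Set ℝ) := by
    filter_upwards [hconst] with t ht
    have : |t| = |t₀| :=
      Real.rpow_left_injOn hr.ne' (abs_nonneg t) (abs_nonneg t₀) (ht.trans ht₀.symm)
    rcases abs_eq_abs.1 this with h | h <;> simp [h]
  obtain ⟨t, ht, ht'⟩ := (hpair.and
    (measure_eq_zero_iff_ae_notMem.1 ((Set.toFinite {t₀, -t₀}).measure_zero _))).exists
  exact ht' ht

end Gaussian

instance isProbabilityMeasure_gaussPi (K : ℕ) (σ : ℝ) : IsProbabilityMeasure (gaussPi K σ) := by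
  unfold gaussPi; infer_instance

instance isProbabilityMeasure_jointMeas (K M : ℕ) (σx σn : ℝ) :
    IsProbabilityMeasure (jointMeas K M σx σn) := by
  unfold jointMeas; infer_instance

theorem memLp_jointMeas_fst {K M : ℕ} {σx σn : ℝ} {q : ℝ≥0∞} {g : ℝ → ℝ}
    (hg : MemLp g q (gaussianReal 0 (σx ^ 2).toNNReal)) (k : Fin K) :
    MemLp (fun z => g (z.1 k)) q (jointMeas K M σx σn) :=
  (hg.comp_measurePreserving (measurePreserving_eval
    (fun _ : Fin K => gaussianReal 0 (σx ^ 2).toNNReal) k)).comp_fst (gaussPi M σn)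

theorem memLp_jointMeas_snd {K M : ℕ} {σx σn : ℝ} {q : ℝ≥0∞} {g : ℝ → ℝ}
    (hg : MemLp g q (gaussianReal 0 (σn ^ 2).toNNReal)) (m : Fin M) :
    MemLp (fun z => g (z.2 m)) q (jointMeas K M σx σn) :=
  (hg.comp_measurePreserving (measurePreserving_eval
    (fun _ : Fin M => gaussianReal 0 (σn ^ 2).toNNReal) m)).comp_snd (gaussPi K σx)

theorem variance_mul_sum_sq_le_integral_sq_dotProduct_phi {p : ℝ} (hp : 0 < p) {K M : ℕ}
    (σx σn : ℝ) (a : Fin K → ℝ) :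
    Var[fun t : ℝ => |t| ^ (p / 2); gaussianReal 0 (σx ^ 2).toNNReal] * ∑ k, a k ^ 2
      ≤ ∫ z, (a ⬝ᵥ phi p z.1) ^ 2 ∂jointMeas K M σx σn := by
  rw [jointMeas, integral_fun_fst (fun x => (a ⬝ᵥ phi p x) ^ 2), probReal_univ, one_smul]
  exact variance_mul_sum_sq_le_integral_sq
    (by exact_mod_cast memLp_abs_rpow_gaussianReal (half_pos hp) 2) a

theorem stmt10_general (p σx σn : ℝ) (hp : 0 < p) (hσx : 0 < σx) (K M : ℕ) :
    ∃ Sstar : Matrix (Fin M) (Fin K) ℝ, ∀ S : Matrix (Fin M) (Fin K) ℝ,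
      J p σx σn K M Sstar ≤ J p σx σn K M S := by
  have hv : (σx ^ 2).toNNReal ≠ 0 := (Real.toNNReal_pos.2 (by positivity)).ne'
  have hA : MemLp (fun z => ∑ k, |z.1 k| ^ p) 2 (jointMeas K M σx σn) :=
    memLp_finsetSum _ fun k _ =>
      memLp_jointMeas_fst (by exact_mod_cast memLp_abs_rpow_gaussianReal hp 2) k
  have hX k : MemLp (fun z => phi p z.1 k) 4 (jointMeas K M σx σn) :=
    memLp_jointMeas_fst (by exact_mod_cast memLp_abs_rpow_gaussianReal (half_pos hp) 4) k
  have hN m : MemLp (fun z => z.2 m) 4 (jointMeas K M σx σn) :=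
    memLp_jointMeas_snd (g := id) (by exact_mod_cast memLp_id_gaussianReal 4) m
  exact exists_forall_mse_le hA hX hN (variance_abs_rpow_gaussianReal_pos hv (half_pos hp))
    (variance_mul_sum_sq_le_integral_sq_dotProduct_phi hp σx σn)

/-- The MSE function `J` attains a global minimum on `ℝ^{M×K}`. -/
theorem stmt10 (p σx σn : ℝ) (hp : 0 < p) (hσx : 0 < σx) (hσn : 0 < σn) (K M : ℕ) :
    ∃ Sstar : Matrix (Fin M) (Fin K) ℝ, ∀ S : Matrix (Fin M) (Fin K) ℝ,
      J p σx σn K M Sstar ≤ J p σx σn K M S :=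
  stmt10_general p σx σn hp hσx K M
end

section
/- Let K ∈ ℕ and A ∈ ℝ^{K²×K²}. Suppose the rearranged matrix admits a decomposition R(A) = Σ_{k=1}^{K²} σ_k u_k v_kᵀ with σ_k ∈ ℝ and u_k, v_k ∈ ℝ^{K²} (in particular, a singular value decomposition). Then, with U_k = unvec(u_k) ∈ ℝ^{K×K} and V_k = unvec(v_k) ∈ ℝ^{K×K}, the matrix A decomposes as a sum of Kronecker products: A = Σ_{k=1}^{K²} σ_k U_k ⊗ V_k. -/
/-!
The rearrangement is linear and injective (it only permutes entries), and it sends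
`unvec u ⊗ unvec v` to the rank-one matrix `u vᵀ`; applying it to the claimed identity
turns it into the hypothesis.
-/

open Matrix
open scoped Kronecker

/-- Rearrangement operator: the row of `R(A)` corresponding to the block index
`(i,j)` (listed in column-major order) is `vec(A_{i,j})ᵀ`, where `A_{i,j}` is
the `(i,j)`-th `K × K` block of `A`. -/
def Rearr {K : ℕ} (A : Matrix (Fin K × Fin K) (Fin K × Fin K) ℝ) :
    Matrix (Fin K × Fin K) (Fin K × Fin K) ℝ :=
  Matrix.of fun p q => A (p.2, q.2) (p.1, q.1)

/-- Inverse of column-major vectorization: `unvec(u) i j = u (j,i)`. -/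
def unvecc {K : ℕ} (u : Fin K × Fin K → ℝ) : Matrix (Fin K) (Fin K) ℝ :=
  Matrix.of fun i j => u (j, i)

@[simps]
def rearrLinearMap (K : ℕ) :
    Matrix (Fin K × Fin K) (Fin K × Fin K) ℝ →ₗ[ℝ] Matrix (Fin K × Fin K) (Fin K × Fin K) ℝ where
  toFun := Rearr
  map_add' _ _ := rfl
  map_smul' _ _ := rfl

theorem Rearr_injective (K : ℕ) : Function.Injective (Rearr (K := K)) := by
  intro A B hAB
  ext ⟨a, b⟩ ⟨c, d⟩
  exact congr_fun (congr_fun hAB (c, a)) (d, b)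

theorem Rearr_kronecker_unvecc {K : ℕ} (u v : Fin K × Fin K → ℝ) :
    Rearr (unvecc u ⊗ₖ unvecc v) = vecMulVec u v := by
  ext p q
  simp [Rearr, unvecc, vecMulVec_apply]

/-- If `R(A) = Σₖ σ_k u_k v_kᵀ` (e.g. an SVD), then
`A = Σₖ σ_k (unvec u_k) ⊗ (unvec v_k)`. -/
theorem stmt13 (K : ℕ) (A : Matrix (Fin K × Fin K) (Fin K × Fin K) ℝ)
    (σ : Fin (K ^ 2) → ℝ) (u v : Fin (K ^ 2) → Fin K × Fin K → ℝ)
    (h : Rearr A = ∑ k, σ k • vecMulVec (u k) (v k)) :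
    A = ∑ k, σ k • (unvecc (u k) ⊗ₖ unvecc (v k)) := by
  refine Rearr_injective K (h.trans ?_)
  rw [← rearrLinearMap_apply, map_sum]
  simp only [map_smul, rearrLinearMap_apply, Rearr_kronecker_unvecc]
end

section
/- Let K ∈ ℕ and let A ∈ ℝ^{K²×K²} be symmetric, positive semidefinite, and invariant under the rearrangement operator, i.e. R(A) = A. Then there exist matrices M_1, …, M_{K²} ∈ ℝ^{K×K} such that A = Σ_{k=1}^{K²} M_k ⊗ M_k. -/
open Matrix
open scoped Kronecker

/-! Write `A = Bᵀ B`. Then `R(Bᵀ B) = Σ_r M_r ⊗ M_r`, where `M_r` is the `r`-th row of `B`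
reshaped into a `K × K` matrix; since `R(A) = A`, this is the required decomposition. -/

def unvec {K : ℕ} (v : Fin K × Fin K → ℝ) : Matrix (Fin K) (Fin K) ℝ :=
  Matrix.of fun i j => v (i, j)

lemma Matrix.PosSemidef.exists_eq_transpose_mul_self {n : Type*} [Fintype n]
    {A : Matrix n n ℝ} (hA : A.PosSemidef) : ∃ B : Matrix n n ℝ, A = Bᵀ * B := by
  classical
  open scoped MatrixOrder in
  exact CStarAlgebra.nonneg_iff_eq_star_mul_self.mp hA.nonneg

lemma rearr_transpose_mul_self {K : ℕ} {ι : Type*} [Fintype ι]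
    (B : Matrix ι (Fin K × Fin K) ℝ) :
    Rearr (Bᵀ * B) = ∑ r, unvec (B r) ⊗ₖ unvec (B r) := by
  ext ⟨p₁, p₂⟩ ⟨q₁, q₂⟩
  simp [Rearr, unvec, mul_apply, Matrix.sum_apply, mul_comm]

theorem stmt15_general (K : ℕ) (A : Matrix (Fin K × Fin K) (Fin K × Fin K) ℝ)
    (hpsd : A.PosSemidef) (hR : Rearr A = A) :
    ∃ Ms : Fin (K ^ 2) → Matrix (Fin K) (Fin K) ℝ,
      A = ∑ k, Ms k ⊗ₖ Ms k := by
  obtain ⟨B, rfl⟩ := hpsd.exists_eq_transpose_mul_self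
  let e : Fin (K ^ 2) ≃ Fin K × Fin K := (finCongr (sq K)).trans finProdFinEquiv.symm
  refine ⟨fun k => unvec (B (e k)), ?_⟩
  rw [← hR, rearr_transpose_mul_self, ← e.sum_comp]

/-- A symmetric positive semidefinite matrix that is invariant under the
rearrangement operator decomposes as `A = Σ_{k=1}^{K²} M_k ⊗ M_k`. -/
theorem stmt15 (K : ℕ) (A : Matrix (Fin K × Fin K) (Fin K × Fin K) ℝ)
    (hsymm : A.IsSymm) (hpsd : A.PosSemidef) (hR : Rearr A = A) :
    ∃ Ms : Fin (K ^ 2) → Matrix (Fin K) (Fin K) ℝ,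
      A = ∑ k, Ms k ⊗ₖ Ms k :=
  stmt15_general K A hpsd hR
end
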